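/- arXiv:2602.11324 — 2 statements merged into one kernel-verified Lean document; each statement's English description precedes it below -/
import Mathlib

section
/- Let T be a string of length n, let (B_k)_{k∈ℤ≥0} be a recompression chain for T, and let τ ∈ [1..⌊n/2⌋]. Define Sync ⊆ [0..n−2τ] to consist of exactly those positions i ∈ [0..n−2τ] such that per(T[i..i+2τ)) > τ/3 and at least one of the following holds: (1) i+τ ∈ B_{k(τ)}; (2) there exists a τ-run T[b..e) with b = i+1; (3) there exists a τ-run T[b..e) with e = i+2τ−1. Then Sync is a τ-synchronizing set of T and |Sync| < 70n/τ. -/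
namespace SyncFormal

/-- The fragment `T[i..j)` of a string `T`. -/
def frag {α : Type*} (T : List α) (i j : ℕ) : List α :=
  (T.drop i).take (j - i)

/-- `p` is a period of the string `S`. -/
def IsPeriod {α : Type*} (S : List α) (p : ℕ) : Prop :=
  1 ≤ p ∧ p ≤ S.length ∧ ∀ i : ℕ, i + p < S.length → S[i]? = S[i + p]?

/-- `per S`: the smallest period of `S`. -/
noncomputable def per {α : Type*} (S : List α) : ℕ :=
  sInf {p | IsPeriod S p}

/-- `Sync` is a `τ`-synchronizing set of `T`. -/
def IsSyncSet {α : Type*} (T : List α) (τ : ℕ) (Sync : Set ℕ) : Prop :=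
  (∀ i ∈ Sync, i + 2 * τ ≤ T.length) ∧
  (∀ i j : ℕ, i + 2 * τ ≤ T.length → j + 2 * τ ≤ T.length → i ∈ Sync →
    frag T i (i + 2 * τ) = frag T j (j + 2 * τ) → j ∈ Sync) ∧
  (∀ i : ℕ, i + 3 * τ ≤ T.length + 1 →
    (Set.Ico i (i + τ) ∩ Sync = ∅ ↔ 3 * per (frag T i (i + 3 * τ - 1)) ≤ τ))

/-- `T[b..e)` is a run (maximal repetition) in `T`. -/
def IsRun {α : Type*} (T : List α) (b e : ℕ) : Prop :=
  b < e ∧ e ≤ T.length ∧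
  2 * per (frag T b e) ≤ e - b ∧
  (b = 0 ∨ T[b - 1]? ≠ T[b - 1 + per (frag T b e)]?) ∧
  (e = T.length ∨ T[e]? ≠ T[e - per (frag T b e)]?)

/-- `T[b..e)` is a run of length at least `ℓ` and period at most `p`
(i.e., an element of `RUNS_{ℓ,p}(T)`). -/
def IsRunLP {α : Type*} (T : List α) (ℓ p b e : ℕ) : Prop :=
  IsRun T b e ∧ ℓ ≤ e - b ∧ per (frag T b e) ≤ p

/-- `λ_k = (8/7)^⌊k/2⌋`. -/
noncomputable def lam (k : ℕ) : ℝ := (8 / 7 : ℝ) ^ (k / 2)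

/-- `α_0 = 1`, `α_{k+1} = α_k + ⌊λ_k⌋`. -/
noncomputable def alph : ℕ → ℕ
  | 0 => 1
  | k + 1 => alph k + ⌊lam k⌋₊

/-- `m`-fold concatenation `R^m`. -/
def listPow {α : Type*} (R : List α) : ℕ → List α
  | 0 => []
  | m + 1 => R ++ listPow R m

/-- The length of the primitive root of `S`
(the shortest prefix `R` of `S` with `S = R^m` for some `m ≥ 1`). -/
noncomputable def primRootLen {α : Type*} (S : List α) : ℕ :=
  sInf {r | 0 < r ∧ ∃ m : ℕ, 1 ≤ m ∧ S = listPow (S.take r) m}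

/-- `i` and `j` are consecutive elements of the set `S`. -/
def Consecutive (S : Set ℕ) (i j : ℕ) : Prop :=
  i ∈ S ∧ j ∈ S ∧ i < j ∧ ∀ m ∈ S, m ≤ i ∨ j ≤ m

/-- `(B k)_{k ∈ ℕ}` is a recompression chain for `T`. -/
def IsRecompressionChain {α : Type*} (T : List α) (B : ℕ → Set ℕ) : Prop :=
  B 0 = Set.Ico 1 T.length ∧
  (∀ k, B (k + 1) ⊆ B k) ∧
  (∀ k, B k ⊆ Set.Ico 1 T.length) ∧
  (∀ k, (B k).Finite ∧ ((B k).ncard : ℝ) * lam k ≤ 4 * T.length) ∧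
  (∀ k i j : ℕ, alph k ≤ i → i + alph k ≤ T.length → alph k ≤ j → j + alph k ≤ T.length →
    i ∈ B k → frag T (i - alph k) (i + alph k) = frag T (j - alph k) (j + alph k) → j ∈ B k) ∧
  (∀ k i j : ℕ, Consecutive (B k ∪ {0, T.length}) i j →
    (((j - i : ℕ) : ℝ) ≤ 7 / 4 * lam k ∨ (primRootLen (frag T i j) : ℝ) ≤ lam k))

/-- `k(τ) = max{ j : j = 0 ∨ 16·λ_{j-1} ≤ τ }`. -/
noncomputable def kOf (τ : ℕ) : ℕ :=
  sSup {j : ℕ | j = 0 ∨ 16 * lam (j - 1) ≤ (τ : ℝ)}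

/-- The Elias-γ code of a positive integer `x`:
`⌊log₂ x⌋` zeros followed by the binary representation of `x` (MSB first). -/
def eliasGamma (x : ℕ) : List Bool :=
  List.replicate (Nat.log 2 x) false ++ (Nat.bits x).reverse

/-- Sparse encoding, with `z` pending zeros in front of the remaining sequence. -/
def sparseEncAux : ℕ → List ℕ → List Bool
  | z, [] => if z = 0 then [] else false :: eliasGamma z
  | z, 0 :: rest => sparseEncAux (z + 1) rest
  | z, x :: rest =>
      (if z = 0 then [] else false :: eliasGamma z) ++ (true :: eliasGamma x)
        ++ sparseEncAux 0 rest

/-- The sparse encoding `⟨A⟩` of a sequence of non-negative integers. -/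
def sparseEnc (A : List ℕ) : List Bool := sparseEncAux 0 A

/-- Number of bits contributed by the zero-run tokens of the sparse encoding,
with `z` pending zeros. -/
def zeroRunBitsAux : ℕ → List ℕ → ℕ
  | z, [] => if z = 0 then 0 else 2 * Nat.log 2 z + 2
  | z, 0 :: rest => zeroRunBitsAux (z + 1) rest
  | z, _ :: rest => (if z = 0 then 0 else 2 * Nat.log 2 z + 2) + zeroRunBitsAux 0 rest

/-- Number of bits contributed by zero-run tokens to `⟨A⟩`. -/
def zeroRunBits (A : List ℕ) : ℕ := zeroRunBitsAux 0 A

/-- The natural number whose binary representation (MSB first) is `B`. -/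
def bitsToNat (B : List Bool) : ℕ :=
  B.foldl (fun n b => 2 * n + cond b 1 0) 0

/-- The symbol of the zipped string for a column of values. -/
def zipSym (col : List ℕ) : ℕ :=
  if col.all (· == 0) then 0 else bitsToNat (sparseEnc col)

/-- `zip(A_1, …, A_t)` for sequences of common length `n`. -/
def zipSeqs (A : List (List ℕ)) (n : ℕ) : List ℕ :=
  (List.range n).map fun i => zipSym (A.map fun S => S.getD i 0)

/-- Running a deterministic transducer with transition function `δ` from state `s`
on an input string: returns the state sequence `s_0, …, s_n` and the output string. -/
def runAux {Q Γ I : Type*} (δ : Q → I → Q × Γ) : Q → List I → List Q × List Γ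
  | s, [] => ([s], [])
  | s, x :: xs =>
      (s :: (runAux δ (δ s x).1 xs).1, (δ s x).2 :: (runAux δ (δ s x).1 xs).2)

/-- `R_{ℓ,p}(T) = { i : per(T[i..i+ℓ)) ≤ p }`. -/
def RSet {α : Type*} (T : List α) (ℓ p : ℕ) : Set ℕ :=
  {i | i + ℓ ≤ T.length ∧ per (frag T i (i + ℓ)) ≤ p}

/-!
All boundary arguments rest on one observation: if `p` and `q` are periods of a stretch of length
at least `p + q` and `q` survives one more step, so does `p`, because
`f a = f (a + q) = f (a + q + p) = f (a + p)`. Hence no window straddling the boundary mismatch of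
a run with period `p` can have a period `q` once it contains `p + q` positions of the run, and two
runs sharing `p₁ + p₂` positions coincide.

Consistency. Membership of `i` only depends on `T[i..i+2τ)`: condition (1) by the locality of the
recompression chain, since `α_{k(τ)} ≤ τ`; conditions (2) and (3) because the window contains the
mismatch that ends the run together with `τ` of its positions, so the run is found again, with the
same boundary, at every other occurrence of the window.

Density. If `T[i..i+3τ-1)` is aperiodic, look at `[i+τ, i+2τ)`. A position `s + τ ∈ B_{k(τ)}`
there makes `s` synchronizing unless `T[s..s+2τ)` has period `≤ τ/3`; if there is no such position,
the chain puts `i + τ` inside a block of length `≥ τ ≥ 14 λ_{k(τ)}`, which is a power of a root of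
length `≤ λ_{k(τ)}`. In both cases the run extending that periodic stretch cannot cover the whole
aperiodic window, so it starts or ends inside it, and the position next to that end is
synchronizing.

Size. `|B_k| λ_k ≤ 4n` and `τ < 16 λ_{k(τ)}` give at most `64n/τ` positions of the first kind;
distinct `τ`-runs have starts (and ends) more than `τ/3` apart, which gives `3n/τ` for each of the
other two kinds.
-/

def IsPeriodOn {β : Type*} (f : ℕ → β) (a b p : ℕ) : Prop :=
  ∀ t, a ≤ t → t + p < b → f t = f (t + p)

namespace IsPeriodOn

variable {β : Type*} {f : ℕ → β} {a b p q x y n : ℕ}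

theorem mono (h : IsPeriodOn f a b p) (ha : a ≤ x) (hb : y ≤ b) : IsPeriodOn f x y p :=
  fun t ht htp => h t (ha.trans ht) (htp.trans_le hb)

theorem extend_left (h : IsPeriodOn f (a + 1) b p) (ha : f a = f (a + p)) :
    IsPeriodOn f a b p := by
  intro t ht htp
  rcases ht.eq_or_lt with rfl | ht
  · exact ha
  · exact h t ht htp

theorem extend_right (h : IsPeriodOn f a b p) (hb : f (b - p) = f b) :
    IsPeriodOn f a (b + 1) p := by
  intro t ht htp
  rcases Nat.lt_or_ge (t + p) b with hlt | hge
  · exact h t ht hlt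
  · rwa [show t = b - p by omega, Nat.sub_add_cancel (by omega)]

theorem extend_left_of_isPeriodOn (hp : IsPeriodOn f (a + 1) b p) (hq : IsPeriodOn f a b q)
    (hq1 : 1 ≤ q) (h : a + p + q < b) : IsPeriodOn f a b p :=
  hp.extend_left <| calc
    f a = f (a + q) := hq a le_rfl (by omega)
    _ = f (a + q + p) := hp _ (by omega) (by omega)
    _ = f (a + p + q) := by rw [Nat.add_right_comm]
    _ = f (a + p) := (hq _ (by omega) (by omega)).symm

theorem extend_right_of_isPeriodOn (hp : IsPeriodOn f a b p) (hq : IsPeriodOn f a (b + 1) q)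
    (hq1 : 1 ≤ q) (h : a + p + q ≤ b) : IsPeriodOn f a (b + 1) p := by
  have h₁ := hq (b - p - q) (by omega) (by omega)
  have h₂ := hp (b - p - q) (by omega) (by omega)
  have h₃ := hq (b - q) (by omega) (by omega)
  rw [show b - p - q + q = b - p by omega] at h₁
  rw [show b - p - q + p = b - q by omega] at h₂
  rw [Nat.sub_add_cancel (by omega)] at h₃
  exact hp.extend_right (h₁.symm.trans (h₂.trans h₃))

theorem exists_left_maximal (h : IsPeriodOn f x y p) :
    ∃ b ≤ x, IsPeriodOn f b y p ∧ (b = 0 ∨ f (b - 1) ≠ f (b - 1 + p)) ∧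
      ((x = 0 ∨ f (x - 1) ≠ f (x - 1 + p)) → b = x) := by
  induction x with
  | zero => exact ⟨0, le_rfl, h, Or.inl rfl, fun _ => rfl⟩
  | succ x ih =>
    by_cases hx : f x = f (x + p)
    · obtain ⟨b, hbx, hb, hbmax, -⟩ := ih (h.extend_left hx)
      exact ⟨b, by omega, hb, hbmax, fun hmax => by simp [hx] at hmax⟩
    · exact ⟨x + 1, le_rfl, h, Or.inr (by simpa using hx), fun _ => rfl⟩

theorem exists_right_maximal (h : IsPeriodOn f x y p) (hy : y ≤ n) :
    ∃ e, y ≤ e ∧ e ≤ n ∧ IsPeriodOn f x e p ∧ (e = n ∨ f e ≠ f (e - p)) ∧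
      ((y = n ∨ f y ≠ f (y - p)) → e = y) := by
  induction hk : n - y generalizing y with
  | zero => exact ⟨y, le_rfl, hy, h, Or.inl (by omega), fun _ => rfl⟩
  | succ k ih =>
    by_cases hyp : f y = f (y - p)
    · obtain ⟨e, hye, hen, he, hemax, -⟩ := ih (h.extend_right hyp.symm) (by omega) (by omega)
      exact ⟨e, by omega, hen, he, hemax, fun hmax => hmax.elim (by omega) (absurd hyp)⟩
    · exact ⟨y, le_rfl, hy, h, Or.inr hyp, fun _ => rfl⟩

theorem of_eq_shift (hp : IsPeriodOn f (x + a) (x + b) p) (hxy : ∀ t < b, f (x + t) = f (y + t)) :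
    IsPeriodOn f (y + a) (y + b) p := by
  intro t ht htp
  obtain ⟨u, rfl⟩ : ∃ u, t = y + u := ⟨t - y, by omega⟩
  calc f (y + u) = f (x + u) := (hxy u (by omega)).symm
    _ = f (x + u + p) := hp _ (by omega) (by omega)
    _ = f (y + u + p) := by simpa only [Nat.add_assoc] using hxy (u + p) (by omega)

end IsPeriodOn

section Fragments

variable {α : Type*} {T : List α} {S : List α} {a b i j p L : ℕ}

theorem per_isPeriod (h : S ≠ []) : IsPeriod S (per S) :=
  Nat.sInf_mem (s := {p | IsPeriod S p})
    ⟨S.length, List.length_pos_iff.2 h, le_rfl, fun _ hi => by omega⟩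

theorem per_le (h : IsPeriod S p) : per S ≤ p :=
  Nat.sInf_le h

theorem frag_length (hb : b ≤ T.length) : (frag T a b).length = b - a := by
  simp only [frag, List.length_take, List.length_drop]
  omega

theorem frag_getElem? (hi : i < b - a) : (frag T a b)[i]? = T[a + i]? := by
  rw [frag, List.getElem?_take_of_lt hi, List.getElem?_drop]

theorem frag_ne_nil (hab : a < b) (hb : b ≤ T.length) : frag T a b ≠ [] := by
  rw [← List.length_pos_iff, frag_length hb]
  omega

theorem isPeriod_frag_iff (hb : b ≤ T.length) :
    IsPeriod (frag T a b) p ↔ 1 ≤ p ∧ p ≤ b - a ∧ IsPeriodOn (T[·]?) a b p := by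
  rw [IsPeriod, frag_length hb]
  refine and_congr_right fun _ => and_congr_right fun _ => ⟨fun h t ht htp => ?_, fun h k hk => ?_⟩
  · have := h (t - a) (by omega)
    rwa [frag_getElem? (by omega), frag_getElem? (by omega), Nat.add_sub_cancel' ht,
      ← Nat.add_assoc, Nat.add_sub_cancel' ht] at this
  · rw [frag_getElem? (by omega), frag_getElem? (by omega), ← Nat.add_assoc]
    exact h (a + k) (by omega) (by omega)

theorem isPeriodOn_per_frag (hab : a < b) (hb : b ≤ T.length) :
    IsPeriodOn (T[·]?) a b (per (frag T a b)) :=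
  ((isPeriod_frag_iff hb).1 (per_isPeriod (frag_ne_nil hab hb))).2.2

theorem one_le_per_frag (hab : a < b) (hb : b ≤ T.length) : 1 ≤ per (frag T a b) :=
  (per_isPeriod (frag_ne_nil hab hb)).1

theorem per_frag_le (hb : b ≤ T.length) (hp1 : 1 ≤ p) (hp : p ≤ b - a)
    (h : IsPeriodOn (T[·]?) a b p) : per (frag T a b) ≤ p :=
  per_le ((isPeriod_frag_iff hb).2 ⟨hp1, hp, h⟩)

theorem per_frag_le_per_frag {a' b' : ℕ} (ha : a ≤ a') (hab : a' < b') (hb : b' ≤ b)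
    (hbn : b ≤ T.length) (hper : per (frag T a b) ≤ b' - a') :
    per (frag T a' b') ≤ per (frag T a b) :=
  per_frag_le (hb.trans hbn) (one_le_per_frag (by omega) hbn) hper
    ((isPeriodOn_per_frag (by omega) hbn).mono ha hb)

theorem frag_eq_frag_iff (hi : i + L ≤ T.length) (hj : j + L ≤ T.length) :
    frag T i (i + L) = frag T j (j + L) ↔ ∀ t < L, T[i + t]? = T[j + t]? := by
  refine ⟨fun h t ht => ?_, fun h => List.ext_getElem? fun t => ?_⟩
  · simpa only [frag_getElem? (show t < i + L - i by omega),
      frag_getElem? (show t < j + L - j by omega)] using congrArg (·[t]?) h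
  · rcases Nat.lt_or_ge t L with ht | ht
    · rw [frag_getElem? (by omega), frag_getElem? (by omega)]
      exact h t ht
    · rw [List.getElem?_eq_none (by rw [frag_length hi]; omega),
        List.getElem?_eq_none (by rw [frag_length hj]; omega)]

end Fragments

section Runs

variable {α : Type*} {T : List α} {a b c e i j x y p q L : ℕ}

theorem IsRun.one_le_per (hr : IsRun T b e) : 1 ≤ per (frag T b e) :=
  one_le_per_frag hr.1 hr.2.1

theorem IsRun.isPeriodOn (hr : IsRun T b e) : IsPeriodOn (T[·]?) b e (per (frag T b e)) :=
  isPeriodOn_per_frag hr.1 hr.2.1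

theorem IsRun.not_isPeriodOn_of_lt_start (hr : IsRun T b e) (hxb : x < b) (hye : y ≤ e)
    (hq1 : 1 ≤ q) (hlen : b + per (frag T b e) + q ≤ y) (hq : IsPeriodOn (T[·]?) x y q) :
    False := by
  obtain ⟨a, rfl⟩ : ∃ a, b = a + 1 := ⟨b - 1, by omega⟩
  have hext := (hr.isPeriodOn.mono le_rfl hye).extend_left_of_isPeriodOn
    (hq.mono (by omega) le_rfl) hq1 (by omega)
  exact hr.2.2.2.1.resolve_left (by omega) (by simpa using hext a le_rfl (by omega))

theorem IsRun.not_isPeriodOn_of_end_lt (hr : IsRun T b e) (hbx : b ≤ x) (hey : e < y)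
    (hyn : y ≤ T.length) (hq1 : 1 ≤ q) (hlen : x + per (frag T b e) + q ≤ e)
    (hq : IsPeriodOn (T[·]?) x y q) : False := by
  have hext := (hr.isPeriodOn.mono hbx le_rfl).extend_right_of_isPeriodOn
    (hq.mono le_rfl hey) hq1 hlen
  have heq := hext (e - per (frag T b e)) (by omega) (by omega)
  rw [Nat.sub_add_cancel (by omega)] at heq
  exact (hr.2.2.2.2.resolve_left (by omega)) heq.symm

theorem isRun_of_maximal (hp : IsPeriodOn (T[·]?) b e p) (hp1 : 1 ≤ p) (hlen : b + 2 * p ≤ e)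
    (hen : e ≤ T.length) (hl : b = 0 ∨ T[b - 1]? ≠ T[b - 1 + p]?)
    (hr : e = T.length ∨ T[e]? ≠ T[e - p]?) : IsRun T b e ∧ per (frag T b e) ≤ p := by
  have hqp : per (frag T b e) ≤ p := per_frag_le hen hp1 (by omega) hp
  have hq1 := one_le_per_frag (T := T) (show b < e by omega) hen
  have hq := isPeriodOn_per_frag (T := T) (show b < e by omega) hen
  refine ⟨⟨by omega, hen, by omega, ?_, ?_⟩, hqp⟩
  · rcases b with _ | a
    · exact Or.inl rfl
    refine Or.inr fun hext => (hl.resolve_left (by omega)) ?_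
    simp only [Nat.add_sub_cancel] at hext ⊢
    exact hp.extend_left_of_isPeriodOn (hq.extend_left hext) hq1 (by omega) a le_rfl (by omega)
  · refine hr.imp_right fun hne hext => hne ?_
    have hext' := hp.extend_right_of_isPeriodOn (hq.extend_right hext.symm) hq1 (by omega)
    have := hext' (e - p) (by omega) (by omega)
    rwa [Nat.sub_add_cancel (by omega), eq_comm] at this

theorem exists_run_of_isPeriodOn (h : IsPeriodOn (T[·]?) x y p) (hp1 : 1 ≤ p)
    (hlen : x + 2 * p ≤ y) (hyn : y ≤ T.length) :
    ∃ b e, b ≤ x ∧ y ≤ e ∧ IsRun T b e ∧ per (frag T b e) ≤ p ∧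
      ((x = 0 ∨ T[x - 1]? ≠ T[x - 1 + p]?) → b = x) ∧
      ((y = T.length ∨ T[y]? ≠ T[y - p]?) → e = y) := by
  obtain ⟨b, hbx, hb, hbmax, hpin⟩ := h.exists_left_maximal
  obtain ⟨e, hye, hen, he, hemax, hpin'⟩ := hb.exists_right_maximal hyn
  obtain ⟨hrun, hper⟩ := isRun_of_maximal he hp1 (by omega) hen hbmax hemax
  exact ⟨b, e, hbx, hye, hrun, hper, hpin, hpin'⟩

theorem IsRun.eq_of_overlap {b' e' : ℕ} (hr : IsRun T b e) (hr' : IsRun T b' e')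
    (hov : max b b' + per (frag T b e) + per (frag T b' e') ≤ min e e') : b = b' ∧ e = e' := by
  have hend : ∀ {b₁ e₁ b₂ e₂}, IsRun T b₁ e₁ → IsRun T b₂ e₂ →
      max b₁ b₂ + per (frag T b₁ e₁) + per (frag T b₂ e₂) ≤ min e₁ e₂ → e₂ ≤ e₁ :=
    fun h₁ h₂ hov => not_lt.1 fun hlt => h₁.not_isPeriodOn_of_end_lt (le_max_left _ _) hlt
      h₂.2.1 h₂.one_le_per (by omega) (h₂.isPeriodOn.mono (le_max_right _ _) le_rfl)
  obtain rfl : e = e' := le_antisymm (hend hr' hr (by omega)) (hend hr hr' hov)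
  have hstart : ∀ {b₁ b₂}, IsRun T b₁ e → IsRun T b₂ e →
      max b₁ b₂ + per (frag T b₁ e) + per (frag T b₂ e) ≤ e → b₂ ≤ b₁ :=
    fun h₁ h₂ hov => not_lt.1 fun hlt => h₂.not_isPeriodOn_of_lt_start hlt le_rfl
      h₁.one_le_per (by omega) h₁.isPeriodOn
  exact ⟨le_antisymm (hstart hr' hr (by omega)) (hstart hr hr' (by omega)), rfl⟩

theorem IsRun.exists_run_start_of_eqOn (hr : IsRun T (i + a) e) (ha : 1 ≤ a) (hc : i + c ≤ e)
    (hcL : c ≤ L) (hlen : a + 2 * per (frag T (i + a) e) ≤ c) (hj : j + L ≤ T.length)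
    (hij : ∀ t < L, T[i + t]? = T[j + t]?) :
    ∃ e', j + c ≤ e' ∧ IsRun T (j + a) e' ∧ per (frag T (j + a) e') ≤ per (frag T (i + a) e) := by
  set p := per (frag T (i + a) e)
  have hper : IsPeriodOn (T[·]?) (j + a) (j + c) p :=
    (hr.isPeriodOn.mono le_rfl hc).of_eq_shift fun t ht => hij t (by omega)
  have hleft : T[j + a - 1]? ≠ T[j + a - 1 + p]? := by
    have hne := hr.2.2.2.1.resolve_left (by omega)
    rw [show i + a - 1 = i + (a - 1) by omega, Nat.add_assoc, hij _ (by omega),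
      hij _ (by omega)] at hne
    rwa [show j + a - 1 = j + (a - 1) by omega, Nat.add_assoc]
  obtain ⟨b', e', -, he', hrun, hp', hpin, -⟩ :=
    exists_run_of_isPeriodOn hper hr.one_le_per (by omega) (by omega)
  obtain rfl := hpin (Or.inr hleft)
  exact ⟨e', he', hrun, hp'⟩

theorem IsRun.exists_run_end_of_eqOn (hr : IsRun T b (i + c)) (hb : b ≤ i + a) (hcL : c < L)
    (hlen : a + 2 * per (frag T b (i + c)) ≤ c) (hi : i + L ≤ T.length) (hj : j + L ≤ T.length)
    (hij : ∀ t < L, T[i + t]? = T[j + t]?) :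
    ∃ b', b' ≤ j + a ∧ IsRun T b' (j + c) ∧ per (frag T b' (j + c)) ≤ per (frag T b (i + c)) := by
  set p := per (frag T b (i + c))
  have hper : IsPeriodOn (T[·]?) (j + a) (j + c) p :=
    (hr.isPeriodOn.mono hb le_rfl).of_eq_shift fun t ht => hij t (by omega)
  have hright : T[j + c]? ≠ T[j + c - p]? := by
    have hne := hr.2.2.2.2.resolve_left (by omega)
    rw [Nat.add_sub_assoc (by omega), hij _ hcL, hij _ (by omega)] at hne
    rwa [Nat.add_sub_assoc (by omega)]
  obtain ⟨b', e', hb', -, hrun, hp', -, hpin⟩ :=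
    exists_run_of_isPeriodOn hper hr.one_le_per (by omega) (by omega)
  obtain rfl := hpin (Or.inr hright)
  exact ⟨b', hb', hrun, hp'⟩

end Runs

section Schedule

variable {k τ : ℕ}

theorem lam_pos (k : ℕ) : 0 < lam k := by
  unfold lam
  positivity

theorem lam_add_two (k : ℕ) : lam (k + 2) = 8 / 7 * lam k := by
  rw [lam, lam, show (k + 2) / 2 = k / 2 + 1 by omega, pow_succ, mul_comm]

theorem lam_le_lam_succ (k : ℕ) : lam k ≤ lam (k + 1) :=
  pow_le_pow_right₀ (by norm_num) (by omega)

-- The step `α_{k+1} = α_k + ⌊λ_k⌋` is absorbed because `8 λ_k = 7 λ_{k+2}`.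
theorem alph_le_seven_mul_lam_add_lam_succ (k : ℕ) : (alph k : ℝ) ≤ 7 * (lam k + lam (k + 1)) := by
  induction k with
  | zero => norm_num [alph, lam]
  | succ k ih =>
    have hfloor : (⌊lam k⌋₊ : ℝ) ≤ lam k := Nat.floor_le (lam_pos k).le
    have := lam_add_two k
    simp only [alph, Nat.cast_add]
    linarith

theorem alph_le_sixteen_mul_lam_pred (hk : 1 ≤ k) : (alph k : ℝ) ≤ 16 * lam (k - 1) := by
  obtain ⟨k, rfl⟩ : ∃ j, k = j + 1 := ⟨k - 1, by omega⟩
  have := alph_le_seven_mul_lam_add_lam_succ (k + 1)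
  have := lam_add_two k
  have := lam_le_lam_succ (k + 1)
  rw [Nat.add_sub_cancel]
  linarith

theorem bddAbove_kOf (τ : ℕ) : BddAbove {j : ℕ | j = 0 ∨ 16 * lam (j - 1) ≤ τ} := by
  refine ⟨2 * τ + 2, fun j hj => ?_⟩
  rcases hj with rfl | hj
  · omega
  have hbern := one_add_mul_le_pow (show (-2 : ℝ) ≤ 1 / 7 by norm_num) ((j - 1) / 2)
  rw [show (1 : ℝ) + 1 / 7 = 8 / 7 by norm_num, ← lam] at hbern
  have : (((j - 1) / 2 : ℕ) : ℝ) ≤ τ := by linarith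
  have : (j - 1) / 2 ≤ τ := by exact_mod_cast this
  omega

theorem kOf_mem (τ : ℕ) : kOf τ = 0 ∨ 16 * lam (kOf τ - 1) ≤ τ :=
  Nat.sSup_mem ⟨0, Or.inl rfl⟩ (bddAbove_kOf τ)

theorem lt_sixteen_mul_lam_kOf (τ : ℕ) : (τ : ℝ) < 16 * lam (kOf τ) := by
  by_contra! h
  have : kOf τ + 1 ≤ kOf τ := le_csSup (bddAbove_kOf τ) (Or.inr (by simpa using h))
  omega

theorem alph_kOf_le (hτ : 1 ≤ τ) : alph (kOf τ) ≤ τ := by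
  rcases Nat.eq_zero_or_pos (kOf τ) with h0 | hpos
  · rwa [h0]
  have := alph_le_sixteen_mul_lam_pred hpos
  have := (kOf_mem τ).resolve_left (by omega)
  exact_mod_cast (show (alph (kOf τ) : ℝ) ≤ τ by linarith)

theorem fourteen_mul_lam_kOf_le (hk : 1 ≤ kOf τ) : 14 * lam (kOf τ) ≤ τ := by
  have := (kOf_mem τ).resolve_left (by omega)
  have := lam_le_lam_succ (kOf τ)
  have := lam_add_two (kOf τ - 1)
  rw [show kOf τ - 1 + 2 = kOf τ + 1 by omega] at this
  linarith

end Schedule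

section PrimitiveRoot

variable {α : Type*} {R S : List α} {m : ℕ}

theorem listPow_succ' (R : List α) (m : ℕ) : listPow R (m + 1) = listPow R m ++ R := by
  induction m with
  | zero => simp [listPow]
  | succ m ih =>
    show R ++ listPow R (m + 1) = (R ++ listPow R m) ++ R
    rw [ih, List.append_assoc]

theorem isPeriod_listPow (hR : R ≠ []) (hm : 1 ≤ m) : IsPeriod (listPow R m) R.length := by
  obtain ⟨m, rfl⟩ : ∃ j, m = j + 1 := ⟨m - 1, by omega⟩
  have hlen : (listPow R (m + 1)).length = (listPow R m).length + R.length := by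
    rw [listPow_succ', List.length_append]
  refine ⟨List.length_pos_iff.2 hR, by omega, fun i hi => ?_⟩
  calc (listPow R (m + 1))[i]? = (listPow R m ++ R)[i]? := by rw [listPow_succ']
    _ = (listPow R m)[i]? := List.getElem?_append_left (by omega)
    _ = (R ++ listPow R m)[i + R.length]? := by
      rw [List.getElem?_append_right (by omega), Nat.add_sub_cancel]
    _ = (listPow R (m + 1))[i + R.length]? := rfl

theorem isPeriod_primRootLen (h : S ≠ []) : IsPeriod S (primRootLen S) := by
  have hlen : S.length ∈ {r | 0 < r ∧ ∃ m : ℕ, 1 ≤ m ∧ S = listPow (S.take r) m} :=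
    ⟨List.length_pos_iff.2 h, 1, le_rfl, by simp [listPow]⟩
  obtain ⟨hpos, m, hm, hS⟩ : 0 < primRootLen S ∧
      ∃ m : ℕ, 1 ≤ m ∧ S = listPow (S.take (primRootLen S)) m := Nat.sInf_mem ⟨_, hlen⟩
  have hle : primRootLen S ≤ S.length := Nat.sInf_le hlen
  have hR : S.take (primRootLen S) ≠ [] := by
    simp only [ne_eq, List.take_eq_nil_iff, not_or]
    exact ⟨by omega, h⟩
  have := isPeriod_listPow hR hm
  rwa [← hS, List.length_take, min_eq_left hle] at this

end PrimitiveRoot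

def syncSet {α : Type*} (T : List α) (B : ℕ → Set ℕ) (τ : ℕ) : Set ℕ :=
  {i | i + 2 * τ ≤ T.length ∧ τ < 3 * per (frag T i (i + 2 * τ)) ∧
    (i + τ ∈ B (kOf τ) ∨ (∃ e, IsRunLP T τ (τ / 3) (i + 1) e) ∨
      (∃ b, IsRunLP T τ (τ / 3) b (i + 2 * τ - 1)))}

section Sync

variable {α : Type*} {T : List α} {B : ℕ → Set ℕ} {τ i j s b e k u v : ℕ}

theorem mem_syncSet_of_run_start (hr : IsRun T (s + 1) e) (hlen : s + 1 + τ ≤ e)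
    (hper : 3 * per (frag T (s + 1) e) ≤ τ) (hs : s + 2 * τ ≤ T.length) :
    s ∈ syncSet T B τ := by
  have := hr.one_le_per
  refine ⟨hs, not_le.1 fun hq => ?_, Or.inr (Or.inl ⟨e, hr, by omega, by omega⟩)⟩
  have hwin := isPeriodOn_per_frag (T := T) (a := s) (by omega) hs
  exact hr.not_isPeriodOn_of_lt_start (lt_add_one s) hlen (one_le_per_frag (by omega) hs)
    (by omega) (hwin.mono le_rfl (by omega))

theorem mem_syncSet_of_run_end (hr : IsRun T b (s + 2 * τ - 1)) (hlen : b + τ ≤ s + 2 * τ - 1)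
    (hper : 3 * per (frag T b (s + 2 * τ - 1)) ≤ τ) (hs : s + 2 * τ ≤ T.length) :
    s ∈ syncSet T B τ := by
  have := hr.one_le_per
  refine ⟨hs, not_le.1 fun hq => ?_, Or.inr (Or.inr ⟨b, hr, by omega, by omega⟩)⟩
  have hwin := isPeriodOn_per_frag (T := T) (a := s) (by omega) hs
  exact hr.not_isPeriodOn_of_end_lt (x := s + τ - 1) (by omega) (by omega) hs
    (one_le_per_frag (by omega) hs) (by omega) (hwin.mono (by omega) le_rfl)

-- A run cannot cover the whole aperiodic window, so one of its ends falls inside it.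
theorem exists_mem_syncSet_of_run (hr : IsRun T b e) (hper : 3 * per (frag T b e) ≤ τ)
    (hb : b ≤ i + τ) (he : i + 2 * τ ≤ e) (hi : i + 3 * τ ≤ T.length + 1)
    (hW : τ < 3 * per (frag T i (i + 3 * τ - 1))) :
    ∃ s ∈ Set.Ico i (i + τ), s ∈ syncSet T B τ := by
  have := hr.one_le_per
  have hen := hr.2.1
  by_cases hib : i < b
  · obtain ⟨s, rfl⟩ : ∃ s, b = s + 1 := ⟨b - 1, by omega⟩
    exact ⟨s, ⟨by omega, by omega⟩, mem_syncSet_of_run_start hr (by omega) hper (by omega)⟩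
  by_cases hei : e + 2 ≤ i + 3 * τ
  · obtain ⟨s, rfl⟩ : ∃ s, e = s + 2 * τ - 1 := ⟨e + 1 - 2 * τ, by omega⟩
    exact ⟨s, ⟨by omega, by omega⟩, mem_syncSet_of_run_end hr (by omega) hper (by omega)⟩
  have := per_frag_le_per_frag (T := T) (a' := i) (b' := i + 3 * τ - 1) (not_lt.1 hib)
    (by omega) (by omega) hen (by omega)
  omega

theorem exists_consecutive {S : Set ℕ} {a c m : ℕ} (ha : a ∈ S) (ham : a ≤ m) (hc : c ∈ S)
    (hmc : m < c) : ∃ u v, Consecutive S u v ∧ u ≤ m ∧ m < v := by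
  have hbdd : BddAbove {x ∈ S | x ≤ m} := ⟨m, fun _ hx => hx.2⟩
  obtain ⟨huS, hum⟩ := Nat.sSup_mem (s := {x ∈ S | x ≤ m}) ⟨a, ha, ham⟩ hbdd
  obtain ⟨hvS, hmv⟩ := Nat.sInf_mem (s := {x ∈ S | m < x}) ⟨c, hc, hmc⟩
  refine ⟨_, _, ⟨huS, hvS, by omega, fun x hx => ?_⟩, hum, hmv⟩
  rcases le_or_gt x m with h | h
  · exact Or.inl (le_csSup hbdd ⟨hx, h⟩)
  · exact Or.inr (Nat.sInf_le ⟨hx, h⟩)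

theorem IsRecompressionChain.le_length (hB : IsRecompressionChain T B)
    (hv : v ∈ B k ∪ {0, T.length}) : v ≤ T.length := by
  obtain ⟨-, -, hsub, -⟩ := hB
  rcases hv with hv | rfl | rfl
  · exact (hsub k hv).2.le
  · exact Nat.zero_le _
  · exact le_rfl

theorem IsRecompressionChain.exists_period_of_consecutive (hB : IsRecompressionChain T B)
    (hcons : Consecutive (B k ∪ {0, T.length}) u v) (hgap : 7 / 4 * lam k < (v - u : ℕ)) :
    ∃ r : ℕ, 1 ≤ r ∧ (r : ℝ) ≤ lam k ∧ IsPeriodOn (T[·]?) u v r := by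
  have hvn := hB.le_length hcons.2.1
  obtain ⟨-, -, -, -, -, hblock⟩ := hB
  have hroot := (hblock k u v hcons).resolve_left (not_le.2 hgap)
  obtain ⟨hr1, -, hper⟩ :=
    (isPeriod_frag_iff hvn).1 (isPeriod_primRootLen (frag_ne_nil hcons.2.2.1 hvn))
  exact ⟨_, hr1, hroot, hper⟩

theorem IsRecompressionChain.exists_short_period (hB : IsRecompressionChain T B) (hτ : 1 ≤ τ)
    (hi : i + 2 * τ ≤ T.length) (hmid : ∀ s ∈ Set.Ico (i + τ) (i + 2 * τ), s ∉ B (kOf τ)) :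
    ∃ u v r, u ≤ i + τ ∧ i + 2 * τ ≤ v ∧ v ≤ T.length ∧ 1 ≤ r ∧ 14 * r ≤ τ ∧
      IsPeriodOn (T[·]?) u v r := by
  obtain ⟨u, v, hcons, hu, hv⟩ := exists_consecutive (S := B (kOf τ) ∪ {0, T.length})
    (Or.inr (Or.inl rfl)) (Nat.zero_le (i + τ)) (Or.inr (Or.inr rfl)) (by omega)
  have hv2 : i + 2 * τ ≤ v := by
    rcases hcons.2.1 with hvB | rfl | rfl
    · exact not_lt.1 fun hlt => hmid v ⟨by omega, hlt⟩ hvB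
    · omega
    · exact hi
  have hk : 1 ≤ kOf τ := by
    refine Nat.one_le_iff_ne_zero.2 fun hk0 => hmid (i + τ) ⟨le_rfl, by omega⟩ ?_
    rw [hk0, hB.1]
    exact ⟨by omega, by omega⟩
  have hlam := fourteen_mul_lam_kOf_le hk
  have hgap : (τ : ℝ) ≤ (v - u : ℕ) := by exact_mod_cast (show τ ≤ v - u by omega)
  obtain ⟨r, hr1, hrl, hper⟩ :=
    hB.exists_period_of_consecutive hcons (by linarith [lam_pos (kOf τ)])
  have h14 : 14 * r ≤ τ := by exact_mod_cast (show (14 * r : ℝ) ≤ τ by linarith)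
  exact ⟨u, v, r, hu, hv2, hB.le_length hcons.2.1, hr1, h14, hper⟩

theorem exists_mem_syncSet (hB : IsRecompressionChain T B) (hτ : 1 ≤ τ)
    (hi : i + 3 * τ ≤ T.length + 1) (hW : τ < 3 * per (frag T i (i + 3 * τ - 1))) :
    ∃ s ∈ Set.Ico i (i + τ), s ∈ syncSet T B τ := by
  by_cases hmid : ∃ s ∈ Set.Ico (i + τ) (i + 2 * τ), s ∈ B (kOf τ)
  · obtain ⟨s', ⟨hs₁, hs₂⟩, hsB⟩ := hmid
    obtain ⟨s, rfl⟩ : ∃ s, s' = s + τ := ⟨s' - τ, by omega⟩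
    have hsn : s + 2 * τ ≤ T.length := by omega
    by_cases hper : τ < 3 * per (frag T s (s + 2 * τ))
    · exact ⟨s, ⟨by omega, by omega⟩, hsn, hper, Or.inl hsB⟩
    obtain ⟨b, e, hb, he, hr, hpe, -⟩ := exists_run_of_isPeriodOn
      (isPeriodOn_per_frag (a := s) (by omega) hsn) (one_le_per_frag (by omega) hsn) (by omega) hsn
    exact exists_mem_syncSet_of_run hr (by omega) (by omega) (by omega) hi hW
  push Not at hmid
  obtain ⟨u, v, r, hu, hv, hvn, hr1, hr14, hper⟩ := hB.exists_short_period hτ (by omega) hmid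
  obtain ⟨b, e, hb, he, hrun, hpe, -⟩ := exists_run_of_isPeriodOn hper hr1 (by omega) hvn
  exact exists_mem_syncSet_of_run hrun (by omega) (by omega) (by omega) hi hW

theorem syncSet_inter_eq_empty (hi : i + 3 * τ ≤ T.length + 1)
    (hW : 3 * per (frag T i (i + 3 * τ - 1)) ≤ τ) : Set.Ico i (i + τ) ∩ syncSet T B τ = ∅ := by
  refine Set.eq_empty_of_forall_notMem fun s ⟨⟨hs₁, hs₂⟩, hsn, hper, _⟩ => ?_
  have := per_frag_le_per_frag (T := T) (a' := s) (b' := s + 2 * τ) hs₁ (by omega) (by omega)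
    (show i + 3 * τ - 1 ≤ T.length by omega) (by omega)
  omega

theorem syncSet_consistent (hB : IsRecompressionChain T B) (hτ : 1 ≤ τ)
    (hi : i + 2 * τ ≤ T.length) (hj : j + 2 * τ ≤ T.length) (hiS : i ∈ syncSet T B τ)
    (heq : frag T i (i + 2 * τ) = frag T j (j + 2 * τ)) : j ∈ syncSet T B τ := by
  obtain ⟨-, hper, hcond⟩ := hiS
  have hij := (frag_eq_frag_iff hi hj).1 heq
  refine ⟨hj, heq ▸ hper, ?_⟩
  rcases hcond with hBi | ⟨e, hr, hlen, hp⟩ | ⟨b, hr, hlen, hp⟩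
  · obtain ⟨-, -, -, -, hlocal, -⟩ := hB
    have hα := alph_kOf_le hτ
    set a := alph (kOf τ)
    have hwin : frag T (i + τ - a) (i + τ + a) = frag T (j + τ - a) (j + τ + a) := by
      rw [show i + τ + a = i + τ - a + 2 * a by omega, show j + τ + a = j + τ - a + 2 * a by omega,
        frag_eq_frag_iff (by omega) (by omega)]
      intro t ht
      simpa only [show i + τ - a + t = i + (τ - a + t) by omega,
        show j + τ - a + t = j + (τ - a + t) by omega] using hij (τ - a + t) (by omega)
    exact Or.inl (hlocal _ _ _ (by omega) (by omega) (by omega) (by omega) hBi hwin)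
  · obtain ⟨e', he', hr', hp'⟩ := hr.exists_run_start_of_eqOn (c := τ + 1) le_rfl (by omega)
      (by omega) (by omega) hj hij
    exact Or.inr (Or.inl ⟨e', hr', by omega, by omega⟩)
  · rw [show i + 2 * τ - 1 = i + (2 * τ - 1) by omega] at hr hlen hp
    obtain ⟨b', hb', hr', hp'⟩ := hr.exists_run_end_of_eqOn (a := τ - 1) (by omega) (by omega)
      (by omega) hi hj hij
    rw [← show j + 2 * τ - 1 = j + (2 * τ - 1) by omega] at hr' hp'
    exact Or.inr (Or.inr ⟨b', hr', by omega, by omega⟩)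

theorem isSyncSet_syncSet (hB : IsRecompressionChain T B) (hτ : 1 ≤ τ) :
    IsSyncSet T τ (syncSet T B τ) := by
  refine ⟨fun i hi => hi.1, fun i j hi hj => syncSet_consistent hB hτ hi hj, fun i hi => ?_⟩
  refine ⟨fun hempty => not_lt.1 fun hW => ?_, syncSet_inter_eq_empty hi⟩
  obtain ⟨s, hs, hsS⟩ := exists_mem_syncSet hB hτ hi hW
  exact hempty.subset ⟨hs, hsS⟩

theorem finite_syncSet : (syncSet T B τ).Finite :=
  (Set.finite_Iic T.length).subset fun i hi => Set.mem_Iic.2 (by have := hi.1; omega)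

end Sync

section Counting

theorem ncard_le_div_add_one_of_sep {S : Set ℕ} {N d : ℕ} (hd : 0 < d) (hS : S ⊆ Set.Iic N)
    (hsep : ∀ a ∈ S, ∀ b ∈ S, a < b → a + d ≤ b) : S.ncard ≤ N / d + 1 := by
  have hinj : Set.InjOn (· / d) S := by
    intro a ha b hb hab
    by_contra hne
    wlog hlt : a < b generalizing a b
    · exact this hb ha hab.symm (Ne.symm hne) (by omega)
    have := Nat.div_le_div_right (c := d) (hsep a ha b hb hlt)
    rw [Nat.add_div_right _ hd] at this
    simp only at hab
    omega
  calc S.ncard = ((· / d) '' S).ncard := hinj.ncard_image.symm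
    _ ≤ (Set.Iic (N / d)).ncard :=
      Set.ncard_le_ncard (by rintro _ ⟨x, hx, rfl⟩; exact Nat.div_le_div_right (hS hx))
        (Set.finite_Iic _)
    _ = N / d + 1 := by rw [← Finset.coe_Iic, Set.ncard_coe_finset, Nat.card_Iic]

theorem mul_ncard_le_of_sep {S : Set ℕ} {N τ : ℕ} (hS : S ⊆ Set.Iic N)
    (hsep : ∀ a ∈ S, ∀ b ∈ S, a < b → a + (τ / 3 + 1) ≤ b) : τ * S.ncard ≤ 3 * N + τ := by
  set d := τ / 3 + 1
  have hcard := ncard_le_div_add_one_of_sep (Nat.succ_pos _) hS hsep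
  have hdiv := Nat.div_mul_le_self N d
  have hτ := Nat.mul_le_mul_right (N / d) (show τ ≤ 3 * d by omega)
  calc τ * S.ncard ≤ τ * (N / d + 1) := Nat.mul_le_mul_left τ hcard
    _ = τ * (N / d) + τ := by ring
    _ ≤ 3 * (N / d * d) + τ := by linarith
    _ ≤ 3 * N + τ := by omega

variable {α : Type*} {T : List α} {B : ℕ → Set ℕ} {τ b₁ b₂ e₁ e₂ : ℕ}

theorem IsRunLP.add_le_of_start_lt (h₁ : IsRunLP T τ (τ / 3) b₁ e₁)
    (h₂ : IsRunLP T τ (τ / 3) b₂ e₂) (hlt : b₁ < b₂) : b₁ + (τ / 3 + 1) ≤ b₂ := by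
  by_contra! hclose
  have := (h₁.1.eq_of_overlap h₂.1 (by have := h₁.2; have := h₂.2; omega)).1
  omega

theorem IsRunLP.add_le_of_end_lt (h₁ : IsRunLP T τ (τ / 3) b₁ e₁)
    (h₂ : IsRunLP T τ (τ / 3) b₂ e₂) (hlt : e₁ < e₂) : e₁ + (τ / 3 + 1) ≤ e₂ := by
  by_contra! hclose
  have := (h₁.1.eq_of_overlap h₂.1 (by have := h₁.2; have := h₂.2; omega)).2
  omega

theorem IsRecompressionChain.mul_ncard_preimage_le (hB : IsRecompressionChain T B) :
    τ * {i | i + τ ∈ B (kOf τ)}.ncard ≤ 64 * T.length := by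
  obtain ⟨-, -, -, hsize, -⟩ := hB
  obtain ⟨hfin, hcard⟩ := hsize (kOf τ)
  have hle : ({i | i + τ ∈ B (kOf τ)}.ncard : ℝ) ≤ (B (kOf τ)).ncard := by
    exact_mod_cast Set.ncard_le_ncard_of_injOn (· + τ) (fun _ h => h)
      (add_left_injective τ).injOn hfin
  have hτ := lt_sixteen_mul_lam_kOf τ
  have hlam := lam_pos (kOf τ)
  have : (τ * {i | i + τ ∈ B (kOf τ)}.ncard : ℝ) ≤ 64 * T.length := by
    calc (τ * {i | i + τ ∈ B (kOf τ)}.ncard : ℝ)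
        ≤ 16 * lam (kOf τ) * (B (kOf τ)).ncard := by gcongr
      _ ≤ 64 * T.length := by linarith
  exact_mod_cast this

theorem mul_ncard_syncSet_lt (hB : IsRecompressionChain T B) (hτ : 1 ≤ τ)
    (hn : 2 * τ ≤ T.length) :
    τ * (syncSet T B τ).ncard < 70 * T.length := by
  set A₁ := {i | i + τ ∈ B (kOf τ)}
  set A₂ := {i | ∃ e, IsRunLP T τ (τ / 3) (i + 1) e}
  set A₃ := {i | ∃ b, IsRunLP T τ (τ / 3) b (i + 2 * τ - 1)}
  have hA₂ : A₂ ⊆ Set.Iic (T.length - τ - 1) := fun i ⟨e, hr, hlen, _⟩ => by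
    have := hr.1
    have := hr.2.1
    simp only [Set.mem_Iic]
    omega
  have hA₃ : A₃ ⊆ Set.Iic (T.length + 1 - 2 * τ) := fun i ⟨b, hr, hlen, _⟩ => by
    have := hr.1
    have := hr.2.1
    simp only [Set.mem_Iic]
    omega
  have hfin : (A₁ ∪ A₂ ∪ A₃).Finite :=
    (((hB.2.2.2.1 _).1.preimage (add_left_injective τ).injOn).union
      ((Set.finite_Iic _).subset hA₂)).union ((Set.finite_Iic _).subset hA₃)
  have hcover : syncSet T B τ ⊆ A₁ ∪ A₂ ∪ A₃ := fun i hi => by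
    rcases hi.2.2 with h | h | h
    exacts [Or.inl (Or.inl h), Or.inl (Or.inr h), Or.inr h]
  have h₁ : τ * A₁.ncard ≤ 64 * T.length := hB.mul_ncard_preimage_le
  have h₂ := mul_ncard_le_of_sep (τ := τ) hA₂ fun a ⟨_, ha⟩ b ⟨_, hb⟩ hab => by
    have := ha.add_le_of_start_lt hb (by omega)
    omega
  have h₃ := mul_ncard_le_of_sep (τ := τ) hA₃ fun a ⟨_, ha⟩ b ⟨_, hb⟩ hab => by
    have := ha.add_le_of_end_lt hb (by omega)
    omega
  have hunion : (syncSet T B τ).ncard ≤ A₁.ncard + A₂.ncard + A₃.ncard :=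
    (Set.ncard_le_ncard hcover hfin).trans <| (Set.ncard_union_le _ _).trans <|
      Nat.add_le_add_right (Set.ncard_union_le _ _) _
  have := Nat.mul_le_mul_left τ hunion
  rw [Nat.mul_add, Nat.mul_add] at this
  omega

end Counting

/-- The set `Sync` built from a recompression chain `(B k)` and the `τ`-runs
is a `τ`-synchronizing set of `T` of size `|Sync| < 70n/τ`. -/
theorem statement1 {α : Type*} (n τ : ℕ) (T : List α) (hT : T.length = n)
    (B : ℕ → Set ℕ) (hB : IsRecompressionChain T B)
    (hτ1 : 1 ≤ τ) (hτ2 : 2 * τ ≤ n)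
    (Sync : Set ℕ)
    (hSync : Sync = {i : ℕ | i + 2 * τ ≤ n ∧ τ < 3 * per (frag T i (i + 2 * τ)) ∧
      (i + τ ∈ B (kOf τ) ∨
        (∃ e, IsRunLP T τ (τ / 3) (i + 1) e) ∨
        (∃ b, IsRunLP T τ (τ / 3) b (i + 2 * τ - 1)))}) :
    IsSyncSet T τ Sync ∧ Sync.Finite ∧ τ * Sync.ncard < 70 * n := by
  subst hT hSync
  exact ⟨isSyncSet_syncSet hB hτ1, finite_syncSet, mul_ncard_syncSet_lt hB hτ1 hτ2⟩

end SyncFormal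
end

section
/- For every constant c ≥ 1 there exists a constant C (depending only on c) with the following property: for every positive integer n and every sequence A of n non-negative integers satisfying Σ_{i=0}^{n−1} A[i] ≤ c·n, the sparse encoding satisfies |⟨A⟩| ≤ C·(a+1)·(1 + log₂((n+1)/(a+1))), where a = |{ i ∈ [0..n) : A[i] ≠ 0 }|. -/
/-!
The sparse encoding is a sequence of `m ≤ 2a + 1` tokens (zero-run lengths and non-zero
literals), a token of value `v` costing `2⌊log₂ v⌋ + 2` bits, and the token values sum to
`Σ A + #zeros ≤ (c + 1) n`. Concavity of `log₂` (summing its tangent line at the mean) bounds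
the cost by `2m (1 + log₂ (S / m))`, and `a ≤ m ≤ 2a + 1` turns this into
`O((a + 1) (1 + log₂ ((n + 1) / (a + 1))))`.
-/

namespace SyncFormal

/-- The tokens of `sparseEncAux z A` in order: zero-run lengths and non-zero literals. -/
def sparseTokens : ℕ → List ℕ → List ℕ
  | z, [] => if z = 0 then [] else [z]
  | z, 0 :: rest => sparseTokens (z + 1) rest
  | z, (x + 1) :: rest => (if z = 0 then [] else [z]) ++ (x + 1) :: sparseTokens 0 rest

lemma _root_.Nat.size_eq_log_two_add_one {x : ℕ} (hx : x ≠ 0) : x.size = Nat.log 2 x + 1 :=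
  le_antisymm (Nat.size_le.2 (Nat.lt_pow_succ_log_self one_lt_two x))
    (Nat.lt_size.2 (Nat.pow_log_le_self 2 hx))

lemma length_eliasGamma {x : ℕ} (hx : x ≠ 0) : (eliasGamma x).length = 2 * Nat.log 2 x + 1 := by
  simp [eliasGamma, Nat.size_eq_bits_len, Nat.size_eq_log_two_add_one hx]
  ring

lemma length_sparseEncAux (z : ℕ) (A : List ℕ) :
    (sparseEncAux z A).length = ((sparseTokens z A).map fun v => 2 * Nat.log 2 v + 2).sum := by
  induction A generalizing z with
  | nil => by_cases hz : z = 0 <;> simp [sparseEncAux, sparseTokens, hz, length_eliasGamma]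
  | cons x rest ih =>
    rcases x with _ | x
    · simpa [sparseEncAux, sparseTokens] using ih (z + 1)
    · by_cases hz : z = 0 <;>
        simp [sparseEncAux, sparseTokens, hz, length_eliasGamma, ih] <;> omega

lemma pos_of_mem_sparseTokens {z : ℕ} {A : List ℕ} {v : ℕ} (hv : v ∈ sparseTokens z A) :
    0 < v := by
  induction A generalizing z with
  | nil => by_cases hz : z = 0 <;> simp_all [sparseTokens]; omega
  | cons x rest ih =>
    rcases x with _ | x
    · exact ih hv
    · by_cases hz : z = 0 <;> simp [sparseTokens, hz] at hv <;> grind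

lemma sparseTokens_ne_nil (z : ℕ) {A : List ℕ} (hA : A ≠ []) : sparseTokens z A ≠ [] := by
  induction A generalizing z with
  | nil => contradiction
  | cons x rest ih =>
    rcases x with _ | x
    · rcases eq_or_ne rest [] with rfl | hrest
      · simp [sparseTokens]
      · exact ih (z + 1) hrest
    · simp [sparseTokens]

lemma sum_sparseTokens (z : ℕ) (A : List ℕ) :
    (sparseTokens z A).sum = z + A.sum + A.count 0 := by
  induction A generalizing z with
  | nil => by_cases hz : z = 0 <;> simp [sparseTokens, hz]
  | cons x rest ih =>
    rcases x with _ | x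
    · simp [sparseTokens, ih]; omega
    · by_cases hz : z = 0 <;> simp [sparseTokens, hz, ih] <;> omega

lemma countP_ne_zero_le_length_sparseTokens (z : ℕ) (A : List ℕ) :
    A.countP (· != 0) ≤ (sparseTokens z A).length := by
  induction A generalizing z with
  | nil => simp
  | cons x rest ih =>
    rcases x with _ | x
    · simpa [sparseTokens] using ih (z + 1)
    · have := ih 0
      by_cases hz : z = 0 <;> simp [sparseTokens, hz] <;> omega

lemma length_sparseTokens_le (z : ℕ) (A : List ℕ) :
    (sparseTokens z A).length ≤ 2 * A.countP (· != 0) + 1 := by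
  induction A generalizing z with
  | nil => by_cases hz : z = 0 <;> simp [sparseTokens, hz]
  | cons x rest ih =>
    rcases x with _ | x
    · simpa [sparseTokens] using ih (z + 1)
    · have := ih 0
      by_cases hz : z = 0 <;> simp [sparseTokens, hz] <;> omega

lemma logb_le_tangent {b v T : ℝ} (hb : 1 < b) (hv : 0 < v) (hT : 0 < T) :
    Real.logb b v ≤ (T * Real.log b)⁻¹ * v + (Real.logb b T - (Real.log b)⁻¹) := by
  have hlogb : 0 < Real.log b := Real.log_pos hb
  have hlog : Real.log (v / T) ≤ v / T - 1 := Real.log_le_sub_one_of_pos (div_pos hv hT)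
  rw [Real.log_div hv.ne' hT.ne'] at hlog
  have key : Real.log v ≤ v / T + (Real.log T - 1) := by linarith
  calc Real.logb b v = Real.log v / Real.log b := rfl
    _ ≤ (v / T + (Real.log T - 1)) / Real.log b := by gcongr
    _ = _ := by rw [Real.logb]; field_simp

lemma sum_map_logb_le_length_mul_logb_average {ι : Type*} {b : ℝ} (hb : 1 < b) (l : List ι)
    {f : ι → ℝ} (hf : ∀ i ∈ l, 0 < f i) :
    (l.map fun i => Real.logb b (f i)).sum ≤ l.length * Real.logb b ((l.map f).sum / l.length) := by
  rcases eq_or_ne l [] with rfl | hne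
  · simp
  have hm : (0 : ℝ) < l.length := by exact_mod_cast List.length_pos_iff.2 hne
  set T := (l.map f).sum / l.length with hT_def
  have hT : 0 < T := div_pos (List.sum_pos _ (by simpa using hf) (by simpa using hne)) hm
  calc (l.map fun i => Real.logb b (f i)).sum
      ≤ (l.map fun i => (T * Real.log b)⁻¹ * f i + (Real.logb b T - (Real.log b)⁻¹)).sum :=
        List.sum_le_sum fun i hi => logb_le_tangent hb (hf i hi) hT
    _ = (T * Real.log b)⁻¹ * (l.map f).sum + l.length * (Real.logb b T - (Real.log b)⁻¹) := by
        rw [List.sum_map_add, List.sum_map_mul_left, List.map_const', List.sum_replicate,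
          nsmul_eq_mul]
    _ = l.length * Real.logb b T := by
        have hlogb : 0 < Real.log b := Real.log_pos hb
        have hS : (l.map f).sum = T * l.length := by rw [hT_def]; field_simp
        rw [hS]
        field_simp
        ring

lemma length_sparseEnc_le (A : List ℕ) :
    ((sparseEnc A).length : ℝ) ≤ 2 * (sparseTokens 0 A).length *
      (1 + Real.logb 2 ((sparseTokens 0 A).sum / (sparseTokens 0 A).length)) := by
  set t := sparseTokens 0 A
  have hjensen := sum_map_logb_le_length_mul_logb_average one_lt_two t (f := Nat.cast)
    fun v hv => Nat.cast_pos.2 (pos_of_mem_sparseTokens hv)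
  rw [← Nat.cast_list_sum] at hjensen
  calc ((sparseEnc A).length : ℝ)
      = (t.map fun v => 2 * (Nat.log 2 v : ℝ) + 2).sum := by
        rw [sparseEnc, length_sparseEncAux, Nat.cast_list_sum, List.map_map]
        simp [Function.comp_def, t]
    _ ≤ (t.map fun v : ℕ => 2 * Real.logb 2 v + 2).sum :=
        List.sum_le_sum fun v _ => by gcongr; exact Real.natLog_le_logb v 2
    _ = 2 * (t.map fun v : ℕ => Real.logb 2 v).sum + t.length * 2 := by
        rw [List.sum_map_add, List.sum_map_mul_left, List.map_const', List.sum_replicate,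
          nsmul_eq_mul]
    _ ≤ _ := by linarith

lemma mul_one_add_logb_div_le {m a S N κ : ℝ} (hκ : 1 ≤ κ) (ha : 0 ≤ a) (hm : 1 ≤ m)
    (ham : a ≤ m) (hma : m ≤ 2 * a + 1) (hmS : m ≤ S) (hSN : S ≤ κ * N) (haN : a + 1 ≤ N) :
    2 * m * (1 + Real.logb 2 (S / m)) ≤
      4 * (1 + Real.logb 2 (2 * κ)) * (a + 1) * (1 + Real.logb 2 (N / (a + 1))) := by
  set K := Real.logb 2 (2 * κ)
  set L := Real.logb 2 (N / (a + 1))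
  have hK : 0 ≤ K := Real.logb_nonneg one_lt_two (by linarith)
  have hL : 0 ≤ L := Real.logb_nonneg one_lt_two ((one_le_div (by linarith)).2 haN)
  have hratio : S / m ≤ 2 * κ * (N / (a + 1)) :=
    calc S / m ≤ κ * N / m := by gcongr
      _ ≤ κ * N / ((a + 1) / 2) := by gcongr <;> linarith
      _ = 2 * κ * (N / (a + 1)) := by field_simp
  have hlog : Real.logb 2 (S / m) ≤ K + L := by
    have hκ0 : 0 < 2 * κ := by linarith
    have hN : 0 < N / (a + 1) := div_pos (by linarith) (by linarith)
    rw [← Real.logb_mul hκ0.ne' hN.ne']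
    exact Real.logb_le_logb_of_le one_lt_two (div_pos (by linarith) (by linarith)) hratio
  calc 2 * m * (1 + Real.logb 2 (S / m))
      ≤ 2 * m * (1 + (K + L)) := by gcongr
    _ ≤ 2 * (2 * (a + 1)) * ((1 + K) * (1 + L)) := by
        gcongr
        · linarith
        · nlinarith [mul_nonneg hK hL]
    _ = 4 * (1 + K) * (a + 1) * (1 + L) := by ring

/-- If `Σ A[i] ≤ c·n` then `|⟨A⟩| ≤ C·(a+1)·(1 + log₂((n+1)/(a+1)))`,
where `a` is the number of non-zero entries of `A` and `C` depends only on `c`. -/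
theorem statement8 (c : ℝ) (hc : 1 ≤ c) : ∃ C : ℝ, 0 < C ∧
    ∀ (n : ℕ) (A : List ℕ), 1 ≤ n → A.length = n → (A.sum : ℝ) ≤ c * (n : ℝ) →
      ((sparseEnc A).length : ℝ) ≤
        C * ((A.countP (fun x => x != 0) : ℝ) + 1) *
          (1 + Real.logb 2 (((n : ℝ) + 1) / ((A.countP (fun x => x != 0) : ℝ) + 1))) := by
  have hK : 0 ≤ Real.logb 2 (2 * (c + 1)) := Real.logb_nonneg one_lt_two (by linarith)
  refine ⟨4 * (1 + Real.logb 2 (2 * (c + 1))), by positivity, ?_⟩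
  intro n A hn hlen hsum
  set t := sparseTokens 0 A
  have ht : 0 < t.length :=
    List.length_pos_iff.2 (sparseTokens_ne_nil 0 (List.ne_nil_of_length_pos (by omega)))
  have hmS : t.length ≤ t.sum :=
    List.length_le_sum_of_one_le t fun v hv => pos_of_mem_sparseTokens hv
  have hSN : t.sum ≤ A.sum + n := by
    rw [sum_sparseTokens, zero_add, ← hlen]
    exact Nat.add_le_add_left (List.count_le_length ..) _
  have haN : A.countP (· != 0) ≤ n := hlen ▸ List.countP_le_length
  refine (length_sparseEnc_le A).trans (mul_one_add_logb_div_le (by linarith) (by positivity)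
    (by exact_mod_cast ht) (by exact_mod_cast countP_ne_zero_le_length_sparseTokens 0 A)
    (by exact_mod_cast length_sparseTokens_le 0 A) (by exact_mod_cast hmS) ?_
    (by exact_mod_cast Nat.succ_le_succ haN))
  have hSN' : (t.sum : ℝ) ≤ A.sum + n := by exact_mod_cast hSN
  nlinarith

end SyncFormal
end
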